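/- arXiv:2107.06706 — 2 statements merged into one kernel-verified Lean document; each statement's English description precedes it below -/
import Mathlib

section
/- Erdős–Stone with rainbow colors, base case structure: Let H be a graph with chromatic number χ ≥ 2 and fix ε > 0. There exist n₀ and α > 0 such that: whenever G is a graph on n > n₀ vertices with minimum degree δ(G) > (1 − 1/(χ−1) + ε)n, and c : V(G) → X is a vertex coloring in which every color class has fewer than αn vertices, then G contains a (not necessarily induced) copy of H all of whose vertices receive distinct colors under c. -/
/-!
Induction on the number of parts. Let `G` have `n` vertices, `δ(G) ≥ (1 - 1/q + ε) n`, and contain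
a rainbow `K_q(s)` with `ε s ≥ t + 1`. Double counting the edges into its `q s` vertices shows that
at least `n / s` vertices have `(q - 1) s + t` neighbours there, hence `t` in every part.
Pigeonholing over the choices of `t` such neighbours per part gives a common `K_q(t)` inside the
`K_q(s)` whose common neighbourhood has linearly many vertices. As colour classes have fewer than
`α n` vertices, this neighbourhood contains `t` vertices of distinct colours that are not used by
the `K_q(s)`; they form the last part of a rainbow `K_{q+1}(t)`. With `q = χ - 1` this gives a
rainbow `K_χ(|V(H)|)`, which contains every `χ`-colourable `H`.
-/

open Finset Function

theorem exists_injective_comp_avoiding {V X : Type*} [DecidableEq X] (c : V → X) (F : Finset V)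
    (avoid : Finset X) (k : ℕ) {β : ℝ} (hβ : 0 < β) (hc : ∀ x, (#{v ∈ F | c v = x} : ℝ) ≤ β)
    (hF : (#avoid + k) * β ≤ #F) :
    ∃ e : Fin k → V, (∀ j, e j ∈ F) ∧ Injective (c ∘ e) ∧ ∀ j, c (e j) ∉ avoid := by
  have hF_le : (#F : ℝ) ≤ #(F.image c) * β := by
    rw [card_eq_sum_card_image c F, ← nsmul_eq_mul]
    push_cast
    exact sum_le_card_nsmul _ _ _ fun x _ => hc x
  have hk : k ≤ #(F.image c \ avoid) := by
    have : #avoid + k ≤ #(F.image c) := by exact_mod_cast le_of_mul_le_mul_right (hF.trans hF_le) hβ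
    have := le_card_sdiff avoid (F.image c)
    omega
  obtain ⟨σ⟩ : Nonempty (Fin k ↪ ↥(F.image c \ avoid)) :=
    Embedding.nonempty_of_card_le (by simpa using hk)
  have hpre : ∀ j, ∃ v ∈ F, c v = σ j := fun j => mem_image.mp (mem_sdiff.mp (σ j).2).1
  choose e heF hec using hpre
  refine ⟨e, heF, fun i j h => σ.injective (Subtype.ext ?_), fun j => ?_⟩
  · simpa [hec] using h
  · rw [hec]
    exact (mem_sdiff.mp (σ j).2).2

theorem Finset.sum_le_card_filter_le_mul_add {ι : Type*} (s : Finset ι) (N : ι → ℕ) {M : ℕ}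
    (θ : ℕ) (hN : ∀ i ∈ s, N i ≤ M) :
    ∑ i ∈ s, N i ≤ #{i ∈ s | θ ≤ N i} * M + #s * θ := by
  rw [← sum_filter_add_sum_filter_not s (θ ≤ N ·)]
  gcongr ?_ + ?_
  · simpa using sum_le_card_nsmul _ _ _ fun i hi => hN i (mem_filter.mp hi).1
  · refine (sum_le_card_nsmul _ _ θ fun i hi => ?_).trans ?_
    · exact (not_le.mp (mem_filter.mp hi).2).le
    · simpa using Nat.mul_le_mul_right θ (card_filter_le s _)

theorem le_of_sub_one_mul_add_le_sum {ι : Type*} [Fintype ι] [DecidableEq ι] {x : ι → ℕ}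
    {s t : ℕ} (hx : ∀ i, x i ≤ s) (h : (Fintype.card ι - 1) * s + t ≤ ∑ i, x i) (i : ι) :
    t ≤ x i := by
  rw [← add_sum_erase _ _ (mem_univ i)] at h
  have := sum_le_card_nsmul (univ.erase i) x s fun j _ => hx j
  rw [card_erase_of_mem (mem_univ i), card_univ, smul_eq_mul] at this
  linarith

theorem le_mul_of_mul_minDegree_le {q s t ε n δ b : ℝ} (hq : 1 ≤ q) (hs : 0 ≤ s) (ht : 0 ≤ t)
    (hn : 0 ≤ n) (hεs : t + 1 ≤ ε * s) (hδ : (1 - 1 / q + ε) * n ≤ δ)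
    (hcount : q * s * δ ≤ b * (q * s) + n * ((q - 1) * s + t)) : n ≤ b * s := by
  have hq0 : 0 < q := by linarith
  have hexp : q * s * ((1 - 1 / q + ε) * n) = (q - 1) * s * n + q * (ε * s) * n := by
    field_simp
  have hδ' := mul_le_mul_of_nonneg_left hδ (by positivity : 0 ≤ q * s)
  have hεs' := mul_le_mul_of_nonneg_right hεs (by positivity : 0 ≤ q * n)
  nlinarith [mul_nonneg (mul_nonneg ht hn) (sub_nonneg.mpr hq)]

namespace SimpleGraph

section Counting

variable {V : Type*} {G : SimpleGraph V} [DecidableRel G.Adj]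

theorem card_mul_minDegree_le_sum_card_adj [Fintype V] {ι : Type*} [Fintype ι] (f : ι → V) :
    Fintype.card ι * G.minDegree ≤ ∑ v, #{i | G.Adj v (f i)} := by
  calc Fintype.card ι * G.minDegree = ∑ _i : ι, G.minDegree := by simp
    _ ≤ ∑ i, G.degree (f i) := sum_le_sum fun i _ => G.minDegree_le_degree _
    _ = ∑ i, ∑ v, if G.Adj v (f i) then 1 else 0 := by
      simp only [← card_neighborFinset_eq_degree, neighborFinset_eq_filter, card_filter, adj_comm]
    _ = ∑ v, #{i | G.Adj v (f i)} := by
      simp only [sum_comm (γ := ι), card_filter]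

theorem exists_embedding_adj_of_le_card_adj {ι : Type*} [Fintype ι] [DecidableEq ι] {s t : ℕ}
    {f : ι × Fin s → V} {v : V}
    (hv : (Fintype.card ι - 1) * s + t ≤ #{p | G.Adj v (f p)}) :
    ∃ σ : ι → Fin t ↪ Fin s, ∀ i a, G.Adj v (f (i, σ i a)) := by
  have hpart : ∀ i, t ≤ #{a | G.Adj v (f (i, a))} := by
    refine le_of_sub_one_mul_add_le_sum (s := s) (fun i => ?_) ?_
    · simpa using card_filter_le (univ : Finset (Fin s)) _
    · simpa only [card_filter, Fintype.sum_prod_type] using hv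
  have hemb : ∀ i, ∃ σ : Fin t ↪ Fin s, ∀ a, G.Adj v (f (i, σ a)) := fun i => by
    obtain ⟨σ⟩ : Nonempty (Fin t ↪ {a // G.Adj v (f (i, a))}) :=
      Embedding.nonempty_of_card_le (by simpa [Fintype.card_subtype] using hpart i)
    exact ⟨σ.trans (Embedding.subtype _), fun a => (σ a).2⟩
  choose σ hσ using hemb
  exact ⟨σ, hσ⟩

theorem card_le_card_filter_le_card_adj_mul [Fintype V] {q s t : ℕ} {ε : ℝ} (hq : 1 ≤ q)
    (hεs : (t + 1 : ℝ) ≤ ε * s) (hδ : (1 - 1 / q + ε) * Fintype.card V ≤ G.minDegree)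
    (f : Fin q × Fin s → V) :
    (Fintype.card V : ℝ) ≤ #{v | (q - 1) * s + t ≤ #{p | G.Adj v (f p)}} * s := by
  have hcount := (card_mul_minDegree_le_sum_card_adj (G := G) f).trans
    (sum_le_card_filter_le_mul_add univ _ ((q - 1) * s + t) fun v _ => card_filter_le univ _)
  simp only [Fintype.card_prod, Fintype.card_fin, card_univ] at hcount
  refine le_mul_of_mul_minDegree_le (q := q) (t := t) (δ := G.minDegree) (by exact_mod_cast hq)
    (Nat.cast_nonneg _) (Nat.cast_nonneg _) (Nat.cast_nonneg _) hεs hδ ?_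
  have := (Nat.cast_le (α := ℝ)).mpr hcount
  push_cast [Nat.cast_sub hq] at this
  linarith

theorem exists_embedding_card_le_card_commonNeighbors [Fintype V] [Nonempty V] {q s t : ℕ}
    {ε : ℝ} (hq : 1 ≤ q) (hεs : (t + 1 : ℝ) ≤ ε * s)
    (hδ : (1 - 1 / q + ε) * Fintype.card V ≤ G.minDegree)
    (f : Fin q × Fin s → V) :
    ∃ σ : Fin q → Fin t ↪ Fin s, (Fintype.card V : ℝ) ≤
      #{v | ∀ i a, G.Adj v (f (i, σ i a))} * (s * Fintype.card (Fin q → Fin t ↪ Fin s)) := by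
  set B := ({v | (q - 1) * s + t ≤ #{p | G.Adj v (f p)}} : Finset V)
  have hB := card_le_card_filter_le_card_adj_mul hq hεs hδ f
  have hrich : ∀ v ∈ B, ∃ σ : Fin q → Fin t ↪ Fin s, ∀ i a, G.Adj v (f (i, σ i a)) :=
    fun v hv => exists_embedding_adj_of_le_card_adj (by simpa using (mem_filter.mp hv).2)
  obtain ⟨v₀, hv₀⟩ : B.Nonempty := by
    rw [← card_pos, ← Nat.cast_pos (α := ℝ)]
    have : (0 : ℝ) < Fintype.card V := by exact_mod_cast Fintype.card_pos
    nlinarith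
  have : Nonempty (Fin q → Fin t ↪ Fin s) := ⟨(hrich v₀ hv₀).choose⟩
  choose! σ hσ using hrich
  set C := Fintype.card (Fin q → Fin t ↪ Fin s)
  have hC : (0 : ℝ) < C := by exact_mod_cast Fintype.card_pos
  obtain ⟨σ₀, -, hfiber⟩ := exists_le_card_fiber_of_nsmul_le_card_of_maps_to
    (fun v _ => mem_univ (σ v)) univ_nonempty (b := (#B : ℝ) / C)
    (by rw [nsmul_eq_mul, card_univ, mul_div_cancel₀ _ hC.ne'])
  have hsub : {v ∈ B | σ v = σ₀} ⊆ ({v | ∀ i a, G.Adj v (f (i, σ₀ i a))} : Finset V) :=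
    fun v hv => by
      obtain ⟨hvB, rfl⟩ := mem_filter.mp hv
      simpa using hσ v hvB
  refine ⟨σ₀, hB.trans ?_⟩
  calc (#B : ℝ) * s = #B / C * (s * C) := by field_simp
    _ ≤ _ := by gcongr; exact hfiber.trans (by exact_mod_cast card_le_card hsub)

end Counting

variable {U V X : Type*}

def HasRainbowCopy (H : SimpleGraph U) (G : SimpleGraph V) (c : V → X) : Prop :=
  ∃ f : H →g G, Injective (c ∘ f)

theorem Colorable.exists_injective_hom_completeEquipartiteGraph [Fintype U] {H : SimpleGraph U}
    {q : ℕ} (hH : H.Colorable q) :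
    ∃ h : H →g completeEquipartiteGraph q (Fintype.card U), Injective h :=
  ⟨⟨fun u => (hH.some u, Fintype.equivFin U u), hH.some.valid⟩,
    fun _ _ huv => (Fintype.equivFin U).injective (Prod.ext_iff.mp huv).2⟩

def completeEquipartiteGraphEmbedding {q s t : ℕ} (σ : Fin q → Fin t ↪ Fin s) :
    completeEquipartiteGraph q t ↪g completeEquipartiteGraph q s where
  toFun p := (p.1, σ p.1 p.2)
  inj' := by
    rintro ⟨i, a⟩ ⟨j, b⟩ h
    simp only [Prod.mk.injEq] at h
    obtain ⟨rfl, hab⟩ := h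
    rw [(σ i).injective hab]
  map_rel_iff' := Iff.rfl

section Rainbow

variable {G : SimpleGraph V} {c : V → X}

theorem hasRainbowCopy_completeEquipartiteGraph_succ_of_forall_adj {q t : ℕ}
    (g : completeEquipartiteGraph q t →g G) (hg : Injective (c ∘ g)) (e : Fin t → V)
    (he : Injective (c ∘ e)) (hnew : ∀ j p, c (e j) ≠ c (g p)) (hadj : ∀ j p, G.Adj (e j) (g p)) :
    HasRainbowCopy (completeEquipartiteGraph (q + 1) t) G c := by
  let f : Fin (q + 1) × Fin t → V := fun p => Fin.lastCases (e p.2) (fun i => g (i, p.2)) p.1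
  -- the three facts below in the applied form that `simp_all` can use
  have he' : ∀ a b, c (e a) = c (e b) ↔ a = b := fun _ _ => he.eq_iff
  have hg' : ∀ p p', c (g p) = c (g p') ↔ p = p' := fun _ _ => hg.eq_iff
  have hnew' : ∀ j p, c (g p) ≠ c (e j) := fun j p h => hnew j p h.symm
  refine ⟨⟨f, fun {p p'} hpp' => ?_⟩, fun p p' h => ?_⟩ <;>
    obtain ⟨i, a⟩ := p <;> obtain ⟨j, b⟩ := p' <;>
    cases i using Fin.lastCases <;> cases j using Fin.lastCases <;> simp_all [f, adj_comm]
  exact g.map_rel hpp'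

variable [Fintype V] [Nonempty V] [DecidableEq X] {α : ℝ}

theorem hasRainbowCopy_completeEquipartiteGraph_one {t : ℕ} (hα : α * t ≤ 1)
    (hc : ∀ x, (#{v | c v = x} : ℝ) < α * Fintype.card V) :
    HasRainbowCopy (completeEquipartiteGraph 1 t) G c := by
  have hβ : 0 < α * Fintype.card V :=
    (Nat.cast_nonneg _).trans_lt (hc (c (Classical.arbitrary V)))
  obtain ⟨e, -, he, -⟩ := exists_injective_comp_avoiding c univ ∅ t hβ (fun x => (hc x).le) <| by
    simpa [← mul_assoc, mul_comm _ α] using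
      mul_le_mul_of_nonneg_right hα (Nat.cast_nonneg (Fintype.card V))
  exact ⟨⟨fun p => e p.2, fun {p p'} h => absurd (Subsingleton.elim p.1 p'.1) h⟩,
    he.comp Prod.snd_injective⟩

theorem HasRainbowCopy.completeEquipartiteGraph_succ [DecidableRel G.Adj] {q s t : ℕ} {ε : ℝ}
    (hq : 1 ≤ q) (hεs : (t + 1 : ℝ) ≤ ε * s)
    (hα : α * (s * Fintype.card (Fin q → Fin t ↪ Fin s) * (q * s + t)) ≤ 1)
    (hδ : (1 - 1 / q + ε) * Fintype.card V ≤ G.minDegree)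
    (hc : ∀ x, (#{v | c v = x} : ℝ) < α * Fintype.card V)
    (h : HasRainbowCopy (completeEquipartiteGraph q s) G c) :
    HasRainbowCopy (completeEquipartiteGraph (q + 1) t) G c := by
  obtain ⟨f, hf⟩ := h
  obtain ⟨σ, hσ⟩ := exists_embedding_card_le_card_commonNeighbors hq hεs hδ f
  set C := Fintype.card (Fin q → Fin t ↪ Fin s)
  set F : Finset V := {v | ∀ i a, G.Adj v (f (i, σ i a))}
  set avoid := univ.image (c ∘ f)
  have hβ : 0 < α * Fintype.card V :=
    (Nat.cast_nonneg _).trans_lt (hc (c (Classical.arbitrary V)))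
  have hF : (#avoid + t) * (α * Fintype.card V) ≤ #F := by
    have havoid : (#avoid : ℝ) ≤ q * s := by
      exact_mod_cast card_image_le.trans (by simp)
    have hsC : 0 < (s * C : ℝ) :=
      pos_of_mul_pos_right ((Nat.cast_pos.mpr Fintype.card_pos).trans_le hσ) (Nat.cast_nonneg _)
    refine le_of_mul_le_mul_right ?_ hsC
    calc (#avoid + t) * (α * Fintype.card V) * (s * C)
        ≤ (q * s + t) * (α * Fintype.card V) * (s * C) := by gcongr
      _ = α * (s * C * (q * s + t)) * Fintype.card V := by ring
      _ ≤ Fintype.card V := mul_le_of_le_one_left (Nat.cast_nonneg _) hα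
      _ ≤ _ := hσ
  have hcF : ∀ x, (#{v ∈ F | c v = x} : ℝ) ≤ α * Fintype.card V := fun x =>
    (Nat.cast_le.mpr (card_le_card (filter_subset_filter _ (subset_univ F)))).trans (hc x).le
  obtain ⟨e, heF, he, heavoid⟩ := exists_injective_comp_avoiding c F avoid t hβ hcF hF
  let ι := completeEquipartiteGraphEmbedding σ
  exact hasRainbowCopy_completeEquipartiteGraph_succ_of_forall_adj (f.comp ι.toHom)
    (hf.comp ι.injective) e he
    (fun j p h => heavoid j (h ▸ mem_image_of_mem _ (mem_univ _)))
    (fun j p => (mem_filter.mp (heF j)).2 p.1 p.2)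

end Rainbow

def ForcesRainbowCopy (H : SimpleGraph U) (d : ℝ) : Prop :=
  ∃ α > 0, ∀ (V : Type) [Fintype V] [Nonempty V] (G : SimpleGraph V) [DecidableRel G.Adj]
    (X : Type) [DecidableEq X] (c : V → X), d * Fintype.card V ≤ G.minDegree →
    (∀ x, (#{v | c v = x} : ℝ) < α * Fintype.card V) → HasRainbowCopy H G c

theorem ForcesRainbowCopy.mono {H : SimpleGraph U} {d d' : ℝ} (h : ForcesRainbowCopy H d)
    (hd : d ≤ d') : ForcesRainbowCopy H d' := by
  obtain ⟨α, hα, hH⟩ := h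
  exact ⟨α, hα, fun V _ _ G _ X _ c hδ => hH V G X c ((by gcongr : d * _ ≤ d' * _).trans hδ)⟩

theorem forcesRainbowCopy_completeEquipartiteGraph_one (t : ℕ) (d : ℝ) :
    ForcesRainbowCopy (completeEquipartiteGraph 1 t) d := by
  refine ⟨1 / (t + 1), by positivity, fun V _ _ G _ X _ c _ hc =>
    hasRainbowCopy_completeEquipartiteGraph_one ?_ hc⟩
  rw [div_mul_eq_mul_div, one_mul, div_le_one (by positivity)]
  linarith

theorem ForcesRainbowCopy.completeEquipartiteGraph_succ {q : ℕ} (hq : 1 ≤ q) {ε : ℝ}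
    (hε : 0 < ε) (h : ∀ s, ForcesRainbowCopy (completeEquipartiteGraph q s) (1 - 1 / q + ε))
    (t : ℕ) : ForcesRainbowCopy (completeEquipartiteGraph (q + 1) t) (1 - 1 / q + ε) := by
  obtain ⟨s, hs⟩ : ∃ s : ℕ, (t + 1 : ℝ) ≤ ε * s :=
    ⟨⌈(t + 1) / ε⌉₊, by rw [← div_le_iff₀' hε]; exact Nat.le_ceil _⟩
  obtain ⟨α, hα, hK⟩ := h s
  set M : ℝ := s * Fintype.card (Fin q → Fin t ↪ Fin s) * (q * s + t)
  have hM : 0 ≤ M := by positivity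
  refine ⟨min α (1 / (M + 1)), by positivity, fun V _ _ G _ X _ c hδ hc => ?_⟩
  refine (hK V G X c hδ fun x => (hc x).trans_le ?_).completeEquipartiteGraph_succ hq hs ?_ hδ hc
  · gcongr
    exact min_le_left _ _
  · calc min α (1 / (M + 1)) * M ≤ 1 / (M + 1) * M := by gcongr; exact min_le_right _ _
      _ ≤ 1 := by rw [div_mul_eq_mul_div, one_mul, div_le_one (by positivity)]; linarith

theorem forcesRainbowCopy_completeEquipartiteGraph {q : ℕ} (hq : 1 ≤ q) {ε : ℝ} (hε : 0 < ε)
    (t : ℕ) : ForcesRainbowCopy (completeEquipartiteGraph (q + 1) t) (1 - 1 / q + ε) := by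
  induction q, hq using Nat.le_induction generalizing t with
  | base =>
    exact .completeEquipartiteGraph_succ le_rfl hε
      (fun s => forcesRainbowCopy_completeEquipartiteGraph_one s _) t
  | succ q hq ih =>
    refine .completeEquipartiteGraph_succ (by omega) hε (fun s => (ih s).mono ?_) t
    gcongr
    simp

end SimpleGraph

/-- rainbow Erdős–Stone: if `H` has chromatic number `χ ≥ 2` and `ε > 0`,
there are `n₀` and `α > 0` such that any graph `G` on `n > n₀` vertices with minimum degree
`δ(G) > (1 − 1/(χ−1) + ε)n`, together with any vertex coloring whose color classes all have
fewer than `αn` vertices, contains a (not necessarily induced) copy of `H` whose vertices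
get pairwise distinct colors. -/
theorem stmt10 {A : Type*} [Fintype A] (H : SimpleGraph A) (χ : ℕ) (hχ2 : 2 ≤ χ)
    (hχ : H.chromaticNumber = (χ : ℕ∞)) (ε : ℝ) (hε : 0 < ε) :
    ∃ (n₀ : ℕ) (α : ℝ), 0 < α ∧
      ∀ n : ℕ, n₀ < n → ∀ (G : SimpleGraph (Fin n)), ∀ (_ : DecidableRel G.Adj),
        (1 - 1 / ((χ : ℝ) - 1) + ε) * n < (G.minDegree : ℝ) →
        ∀ (X : Type) (c : Fin n → X),
          (∀ x : X, (Nat.card {v : Fin n // c v = x} : ℝ) < α * n) →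
          ∃ φ : A → Fin n, Function.Injective φ ∧
            (∀ u v, H.Adj u v → G.Adj (φ u) (φ v)) ∧
            Function.Injective (c ∘ φ) := by
  classical
  obtain ⟨α, hα, hK⟩ := SimpleGraph.forcesRainbowCopy_completeEquipartiteGraph
    (by omega : 1 ≤ χ - 1) hε (Fintype.card A)
  refine ⟨0, α, hα, fun n hn G _ hδ X c hc => ?_⟩
  have : Nonempty (Fin n) := ⟨⟨0, hn⟩⟩
  obtain ⟨f, hf⟩ := hK (Fin n) G X c (by simpa [Nat.cast_sub (by omega : 1 ≤ χ)] using hδ.le)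
    fun x => by simpa [Nat.card_eq_fintype_card, Fintype.card_subtype] using hc x
  have hH : H.Colorable (χ - 1 + 1) := by
    rw [Nat.sub_add_cancel (by omega)]
    exact SimpleGraph.chromaticNumber_le_iff_colorable.mp hχ.le
  obtain ⟨h, hh⟩ := hH.exists_injective_hom_completeEquipartiteGraph
  exact ⟨f ∘ h, Injective.of_comp (f := c) (hf.comp hh), fun u v huv => f.map_adj (h.map_adj huv),
    hf.comp hh⟩
end

section
/- If F is a family of graphs with χ(F) := min{χ(F) : F ∈ F} ≥ 2 (so F contains no anti-clique, i.e., no edgeless graph), then for every graph G on n vertices there is a spanning subgraph G′ of G which contains no member of F as an induced subgraph and satisfies |E(G)| − |E(G′)| ≤ |E(G)|/(χ(F)−1). Consequently, ed_{Forb(F)}(p) ≤ p/(χ(F)−1) for all p ∈ [0,1]. -/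
/-- `G` contains no member of the family `𝓕` as an induced subgraph. -/
def InducedFree (𝓕 : ∀ k : ℕ, Set (SimpleGraph (Fin k))) {n : ℕ}
    (G : SimpleGraph (Fin n)) : Prop :=
  ∀ k : ℕ, ∀ F ∈ 𝓕 k, ¬ ∃ φ : Fin k → Fin n, Function.Injective φ ∧
    ∀ a b, F.Adj a b ↔ G.Adj (φ a) (φ b)

/-- The normalized edit distance between two graphs on the same vertex set. -/
noncomputable def gdist {n : ℕ} (G H : SimpleGraph (Fin n)) : ℝ :=
  (symmDiff G.edgeSet H.edgeSet).ncard / (n.choose 2)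

/-- The normalized edit distance from `G` to the hereditary property `Forb(𝓕)`. -/
noncomputable def distForb (𝓕 : ∀ k : ℕ, Set (SimpleGraph (Fin k))) {n : ℕ}
    (G : SimpleGraph (Fin n)) : ℝ :=
  sInf {d : ℝ | ∃ H : SimpleGraph (Fin n), InducedFree 𝓕 H ∧ d = gdist G H}

/-- The maximum distance to `Forb(𝓕)` over `n`-vertex graphs of density `p`. -/
noncomputable def maxDist (𝓕 : ∀ k : ℕ, Set (SimpleGraph (Fin k))) (n : ℕ) (p : ℝ) : ℝ :=
  sSup {d : ℝ | ∃ G : SimpleGraph (Fin n),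
    G.edgeSet.ncard = ⌊p * (n.choose 2 : ℝ)⌋₊ ∧ d = distForb 𝓕 G}

/-- The edit distance function of `Forb(𝓕)`. -/
noncomputable def edFun (𝓕 : ∀ k : ℕ, Set (SimpleGraph (Fin k))) (p : ℝ) : ℝ :=
  Filter.limsup (fun n : ℕ => maxDist 𝓕 n p) Filter.atTop

/-!
Colour the vertices of `G` with `χ - 1` colours and delete the monochromatic edges. The
remaining graph is `(χ - 1)`-colourable, so every graph with a homomorphism into it, in particular
every induced subgraph, has chromatic number below `χ` and hence is not in `𝓕`. Under a uniformly
random colouring each edge is monochromatic with probability `1 / (χ - 1)`, so some colouring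
deletes at most `|E(G)| / (χ - 1)` edges. For `|E(G)| = ⌊p·C(n,2)⌋` the resulting graph
witnesses `dist(G, Forb(𝓕)) ≤ p / (χ - 1)`.
-/

open Finset

theorem card_mul_card_filter_apply_eq_apply {V α : Type*} [Fintype V] [DecidableEq V]
    [Fintype α] [DecidableEq α] {x y : V} (hxy : x ≠ y) :
    Fintype.card α * #{c : V → α | c x = c y} = Fintype.card (V → α) := by
  have hcount : #{c : V → α | c x = c y} = Fintype.card ({v // v ≠ x} → α) := by
    rw [card_filter, ← (Equiv.funSplitAt x α).symm.sum_comp, Fintype.sum_prod_type_right]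
    simp [Equiv.funSplitAt, Equiv.piSplitAt, hxy.symm]
  rw [hcount, Fintype.card_congr (Equiv.funSplitAt x α), Fintype.card_prod]

namespace SimpleGraph

variable {V α : Type*}

theorem edgeSet_sdiff_inf_comap_top (G : SimpleGraph V) (c : V → α) :
    G.edgeSet \ (G ⊓ (⊤ : SimpleGraph α).comap c).edgeSet =
      {e ∈ G.edgeSet | (e.map c).IsDiag} := by
  ext e
  induction e with
  | _ x y => simp [and_comm]

theorem colorable_inf_comap_top [Fintype α] (G : SimpleGraph V) (c : V → α) :
    (G ⊓ (⊤ : SimpleGraph α).comap c).Colorable (Fintype.card α) :=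
  (Coloring.mk (G := G ⊓ (⊤ : SimpleGraph α).comap c) c fun h => h.2).colorable

theorem exists_card_mul_card_filter_isDiag_map_le [Fintype V] [DecidableEq V] [Fintype α]
    [DecidableEq α] [Nonempty α] (G : SimpleGraph V) [DecidableRel G.Adj] :
    ∃ c : V → α, Fintype.card α * #{e ∈ G.edgeFinset | (e.map c).IsDiag} ≤ #G.edgeFinset := by
  have hsum : ∑ c : V → α, Fintype.card α * #{e ∈ G.edgeFinset | (e.map c).IsDiag} =
      ∑ _c : V → α, #G.edgeFinset :=
    calc _ = ∑ e ∈ G.edgeFinset, Fintype.card α * #{c : V → α | (e.map c).IsDiag} := by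
          simp_rw [← mul_sum, card_filter]; rw [sum_comm]
      _ = ∑ e ∈ G.edgeFinset, Fintype.card (V → α) := by
          refine sum_congr rfl fun e he => ?_
          induction e with
          | _ x y =>
            simp only [Sym2.map_mk, Sym2.mk_isDiag_iff]
            exact card_mul_card_filter_apply_eq_apply (G.ne_of_adj (G.mem_edgeFinset.mp he))
      _ = _ := by simp [mul_comm]
  obtain ⟨c, -, hc⟩ := exists_le_of_sum_le univ_nonempty hsum.le
  exact ⟨c, hc⟩

theorem exists_le_colorable_mul_ncard_sdiff_le [Finite V] (G : SimpleGraph V) {t : ℕ}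
    (ht : 0 < t) :
    ∃ G' ≤ G, G'.Colorable t ∧ t * (G.edgeSet \ G'.edgeSet).ncard ≤ G.edgeSet.ncard := by
  classical
  have := Fintype.ofFinite V
  have : Nonempty (Fin t) := ⟨⟨0, ht⟩⟩
  obtain ⟨c, hc⟩ := exists_card_mul_card_filter_isDiag_map_le (α := Fin t) G
  refine ⟨G ⊓ (⊤ : SimpleGraph (Fin t)).comap c, inf_le_left, ?_, ?_⟩
  · simpa using colorable_inf_comap_top G c
  · have hmono : {e ∈ G.edgeSet | (e.map c).IsDiag} =
        ↑{e ∈ G.edgeFinset | (e.map c).IsDiag} := by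
      ext; simp
    rw [edgeSet_sdiff_inf_comap_top, hmono, ← coe_edgeFinset, Set.ncard_coe_finset,
      Set.ncard_coe_finset]
    simpa using hc

theorem ncard_edgeSet_sdiff_of_le [Finite V] {G H : SimpleGraph V} (h : H ≤ G) :
    ((G.edgeSet \ H.edgeSet).ncard : ℝ) = G.edgeSet.ncard - H.edgeSet.ncard := by
  rw [← Set.ncard_sdiff_add_ncard_of_subset (edgeSet_mono h) G.edgeSet.toFinite]
  push_cast
  ring

end SimpleGraph

theorem inducedFree_of_colorable {𝓕 : ∀ k : ℕ, Set (SimpleGraph (Fin k))} {χ m n : ℕ}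
    (hχ : ∀ k : ℕ, ∀ F ∈ 𝓕 k, (χ : ℕ∞) ≤ F.chromaticNumber) (hm : m < χ)
    {G : SimpleGraph (Fin n)} (hG : G.Colorable m) : InducedFree 𝓕 G := by
  rintro k F hF ⟨φ, -, hφ⟩
  have hle := (hχ k F hF).trans (hG.of_hom ⟨φ, (hφ _ _).mp⟩).chromaticNumber_le
  exact absurd (ENat.natCast_le_natCast.mp hle) hm.not_ge

theorem exists_le_inducedFree_sub_le {𝓕 : ∀ k : ℕ, Set (SimpleGraph (Fin k))} {χ n : ℕ}
    (hχ2 : 2 ≤ χ) (hχ : ∀ k : ℕ, ∀ F ∈ 𝓕 k, (χ : ℕ∞) ≤ F.chromaticNumber)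
    (G : SimpleGraph (Fin n)) :
    ∃ G' ≤ G, InducedFree 𝓕 G' ∧
      (G.edgeSet.ncard : ℝ) - G'.edgeSet.ncard ≤ G.edgeSet.ncard / ((χ : ℝ) - 1) := by
  obtain ⟨G', hle, hcol, hcount⟩ :=
    G.exists_le_colorable_mul_ncard_sdiff_le (t := χ - 1) (by omega)
  refine ⟨G', hle, inducedFree_of_colorable hχ (by omega) hcol, ?_⟩
  have hχ1 : ((χ - 1 : ℕ) : ℝ) = χ - 1 := Nat.cast_pred (by omega)
  have hpos : (0 : ℝ) < χ - 1 := by rw [← hχ1]; exact_mod_cast (show 0 < χ - 1 by omega)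
  have hcount' : ((χ : ℝ) - 1) * (G.edgeSet \ G'.edgeSet).ncard ≤ G.edgeSet.ncard := by
    rw [← hχ1]; exact_mod_cast hcount
  rw [← SimpleGraph.ncard_edgeSet_sdiff_of_le hle, le_div_iff₀ hpos]
  linarith

theorem gdist_nonneg {n : ℕ} (G H : SimpleGraph (Fin n)) : 0 ≤ gdist G H := by
  unfold gdist; positivity

theorem gdist_of_le {n : ℕ} {G H : SimpleGraph (Fin n)} (h : H ≤ G) :
    gdist G H = ((G.edgeSet.ncard : ℝ) - H.edgeSet.ncard) / n.choose 2 := by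
  rw [gdist, symmDiff_of_ge (SimpleGraph.edgeSet_mono h), SimpleGraph.ncard_edgeSet_sdiff_of_le h]

theorem distForb_nonneg (𝓕 : ∀ k : ℕ, Set (SimpleGraph (Fin k))) {n : ℕ}
    (G : SimpleGraph (Fin n)) : 0 ≤ distForb 𝓕 G :=
  Real.sInf_nonneg (by rintro _ ⟨H, -, rfl⟩; exact gdist_nonneg G H)

theorem distForb_le_gdist {𝓕 : ∀ k : ℕ, Set (SimpleGraph (Fin k))} {n : ℕ}
    (G : SimpleGraph (Fin n)) {H : SimpleGraph (Fin n)} (hH : InducedFree 𝓕 H) :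
    distForb 𝓕 G ≤ gdist G H :=
  csInf_le ⟨0, by rintro _ ⟨H, -, rfl⟩; exact gdist_nonneg G H⟩ ⟨H, hH, rfl⟩

theorem maxDist_nonneg (𝓕 : ∀ k : ℕ, Set (SimpleGraph (Fin k))) (n : ℕ) (p : ℝ) :
    0 ≤ maxDist 𝓕 n p :=
  Real.sSup_nonneg (by rintro _ ⟨G, -, rfl⟩; exact distForb_nonneg 𝓕 G)

theorem edFun_le_of_forall_maxDist_le {𝓕 : ∀ k : ℕ, Set (SimpleGraph (Fin k))} {p b : ℝ}
    (h : ∀ n, maxDist 𝓕 n p ≤ b) : edFun 𝓕 p ≤ b :=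
  Filter.limsup_le_of_le (Filter.isCoboundedUnder_le_of_le _ (maxDist_nonneg 𝓕 · p))
    (Filter.Eventually.of_forall h)

theorem edFun_le_div {𝓕 : ∀ k : ℕ, Set (SimpleGraph (Fin k))} {χ : ℕ} (hχ2 : 2 ≤ χ)
    (hχ : ∀ k : ℕ, ∀ F ∈ 𝓕 k, (χ : ℕ∞) ≤ F.chromaticNumber) {p : ℝ} (hp : 0 ≤ p) :
    edFun 𝓕 p ≤ p / ((χ : ℝ) - 1) := by
  have hχ1 : (0 : ℝ) < χ - 1 := by
    rw [sub_pos, Nat.one_lt_cast]; omega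
  refine edFun_le_of_forall_maxDist_le fun n => Real.sSup_le ?_ (by positivity)
  rintro _ ⟨G, hG, rfl⟩
  obtain ⟨G', hle, hfree, hdel⟩ := exists_le_inducedFree_sub_le hχ2 hχ G
  have hE : (G.edgeSet.ncard : ℝ) ≤ p * n.choose 2 := by
    rw [hG]; exact Nat.floor_le (by positivity)
  calc distForb 𝓕 G ≤ gdist G G' := distForb_le_gdist G hfree
    _ = ((G.edgeSet.ncard : ℝ) - G'.edgeSet.ncard) / n.choose 2 := gdist_of_le hle
    _ ≤ G.edgeSet.ncard / ((χ : ℝ) - 1) / n.choose 2 := by gcongr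
    _ = G.edgeSet.ncard / n.choose 2 / ((χ : ℝ) - 1) := div_right_comm _ _ _
    _ ≤ p / ((χ : ℝ) - 1) := by gcongr; exact div_le_of_le_mul₀ (by positivity) hp hE

/-- if every member of `𝓕` has chromatic number at least `χ ≥ 2` (in
particular `𝓕` contains no anti-clique), then every graph `G` has a spanning subgraph `G′`
with no induced member of `𝓕` obtained by deleting at most `|E(G)|/(χ−1)` edges, and
consequently `ed_{Forb(𝓕)}(p) ≤ p/(χ−1)` for all `p ∈ [0,1]`. -/
theorem stmt14 (𝓕 : ∀ k : ℕ, Set (SimpleGraph (Fin k))) (χ : ℕ) (hχ2 : 2 ≤ χ)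
    (hχ : ∀ k : ℕ, ∀ F ∈ 𝓕 k, (χ : ℕ∞) ≤ F.chromaticNumber) :
    (∀ n : ℕ, ∀ G : SimpleGraph (Fin n), ∃ G' : SimpleGraph (Fin n), G' ≤ G ∧
      InducedFree 𝓕 G' ∧
      (G.edgeSet.ncard : ℝ) - (G'.edgeSet.ncard : ℝ) ≤ (G.edgeSet.ncard : ℝ) / ((χ : ℝ) - 1)) ∧
    (∀ p : ℝ, 0 ≤ p → p ≤ 1 → edFun 𝓕 p ≤ p / ((χ : ℝ) - 1)) :=
  ⟨fun _ G => exists_le_inducedFree_sub_le hχ2 hχ G, fun _ hp _ => edFun_le_div hχ2 hχ hp⟩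
end
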